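/- (Lemma of Section 2.2, q-case: q⁻¹-factorial moments of the negative q-binomial distribution of the first kind.) Let n ≥ 1 be a natural number, α ∈ (0,1) and m ∈ ℕ. Then the series ∑_{u=0}^{∞} [u]_{m,q⁻¹} · C_q(n+u−1, u) · α^{u} · q^{b(u)} / ⟨1⊕α⟩_{n+u} converges, with sum equal to [n+m−1]_{m,q} · α^{m}. -/

import Mathlib

open Finset

/-- q-integer `[k]_q = (1 - q^k)/(1 - q)`. -/
noncomputable def qInt (q : ℝ) (k : ℤ) : ℝ := (1 - q ^ k) / (1 - q)

/-- q-factorial `[n]_q! = ∏_{i=1}^n [i]_q`. -/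
noncomputable def qFact (q : ℝ) (n : ℕ) : ℝ := ∏ i ∈ Finset.Icc 1 n, qInt q (i : ℤ)

/-- q-binomial coefficient `C_q(n,k)`. -/
noncomputable def qBinom (q : ℝ) (n k : ℕ) : ℝ := qFact q n / (qFact q k * qFact q (n - k))

/-- q-falling factorial `[u]_{m,q} = ∏_{i=1}^m [u-i+1]_q`. -/
noncomputable def qFall (q : ℝ) (u : ℤ) (m : ℕ) : ℝ := ∏ i ∈ Finset.Icc 1 m, qInt q (u - (i : ℤ) + 1)

/-- `[k]_{q⁻¹} = q^{1-k} · [k]_q`. -/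
noncomputable def qIntInv (q : ℝ) (k : ℤ) : ℝ := q ^ (1 - k) * qInt q k

/-- `[u]_{m,q⁻¹} = ∏_{i=1}^m [u-i+1]_{q⁻¹}`. -/
noncomputable def qFallInv (q : ℝ) (u : ℤ) (m : ℕ) : ℝ := ∏ i ∈ Finset.Icc 1 m, qIntInv q (u - (i : ℤ) + 1)

/-- `b(k) = k(k-1)/2`. -/
def bb (k : ℕ) : ℕ := k * (k - 1) / 2

/-- `⟨1 ⊕ α⟩_m = ∏_{i=1}^m (1 + α q^{i-1})`. -/
noncomputable def oplus (q α : ℝ) (m : ℕ) : ℝ := ∏ i ∈ Finset.Icc 1 m, (1 + α * q ^ (i - 1))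

/-- `⟨1 ⊖ β⟩_m = ∏_{i=1}^m (1 - β q^{i-1})`. -/
noncomputable def ominus (q β : ℝ) (m : ℕ) : ℝ := ∏ i ∈ Finset.Icc 1 m, (1 - β * q ^ (i - 1))

/-- q-trinomial coefficient `T_q(n; x₁, x₂)`. -/
noncomputable def qTri (q : ℝ) (n x1 x2 : ℕ) : ℝ :=
  qFact q n / (qFact q x1 * qFact q x2 * qFact q (n - x1 - x2))

/-!
Since `[u]_{m,q⁻¹}` vanishes for `u < m`, and for `u = v + m`
`[v+m]_{m,q⁻¹} q^{b(v+m)} C_q(n+v+m-1, v+m) = [n+m-1]_{m,q} q^{b(v)} C_q(n+m+v-1, v)`,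
the series is `[n+m-1]_{m,q} α^m` times the total mass `S_{n+m}(α)` of the distribution with
parameter `n + m`. That `S_n(α) = 1` follows by induction on `n`: q-Pascal and
`⟨1⊕α⟩_{k+1} = (1+α) ⟨1⊕αq⟩_k` give `(1+α) S_n(α) = S_{n-1}(αq) + α S_n(αq)` (with `S_0 = 1`,
the mass of the point mass at `0`), so `S_n - 1` shrinks by the factor `α/(1+α) < 1` along
`α ↦ αq`; being bounded on `[0, α]`, it vanishes.
-/

section QCalculus

variable {q : ℝ}

lemma qInt_natCast (q : ℝ) (j : ℕ) : qInt q j = (1 - q ^ j) / (1 - q) := by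
  rw [qInt, zpow_natCast]

lemma qInt_natCast_nonneg (hq0 : 0 ≤ q) (hq1 : q < 1) (j : ℕ) : 0 ≤ qInt q j := by
  rw [qInt_natCast]
  exact div_nonneg (sub_nonneg.2 (pow_le_one₀ hq0 hq1.le)) (sub_nonneg.2 hq1.le)

lemma qInt_natCast_le (hq0 : 0 ≤ q) (hq1 : q < 1) (j : ℕ) : qInt q j ≤ (1 - q)⁻¹ := by
  rw [qInt_natCast, div_eq_mul_inv]
  exact mul_le_of_le_one_left (inv_nonneg.2 (sub_nonneg.2 hq1.le))
    (sub_le_self _ (pow_nonneg hq0 j))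

lemma qFact_zero (q : ℝ) : qFact q 0 = 1 := rfl

lemma qFact_succ (q : ℝ) (n : ℕ) :
    qFact q (n + 1) = qFact q n * ((1 - q ^ (n + 1)) / (1 - q)) := by
  rw [qFact, qFact, Finset.prod_Icc_succ_top (by omega), ← qInt_natCast]

lemma qFact_pos (hq0 : 0 ≤ q) (hq1 : q < 1) (n : ℕ) : 0 < qFact q n := by
  refine Finset.prod_pos fun j hj => ?_
  rw [qInt_natCast]
  exact div_pos (sub_pos.2 (pow_lt_one₀ hq0 hq1 (by simp at hj; omega))) (sub_pos.2 hq1)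

lemma qFact_add_le (hq0 : 0 ≤ q) (hq1 : q < 1) (a P : ℕ) :
    qFact q (a + P) ≤ qFact q a * (1 - q)⁻¹ ^ P := by
  induction P with
  | zero => simp
  | succ P ih =>
    rw [← add_assoc, qFact_succ, ← qInt_natCast, pow_succ, ← mul_assoc]
    exact mul_le_mul ih (qInt_natCast_le hq0 hq1 _) (qInt_natCast_nonneg hq0 hq1 _)
      (by have := qFact_pos hq0 hq1 a; positivity)

lemma qBinom_nonneg (hq0 : 0 ≤ q) (hq1 : q < 1) (n k : ℕ) : 0 ≤ qBinom q n k := by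
  have hF := qFact_pos hq0 hq1
  unfold qBinom
  exact div_nonneg (hF n).le (mul_pos (hF k) (hF _)).le

lemma qBinom_zero_right (hq0 : 0 ≤ q) (hq1 : q < 1) (n : ℕ) : qBinom q n 0 = 1 := by
  have := (qFact_pos hq0 hq1 n).ne'
  simp [qBinom, qFact_zero, this]

lemma qBinom_self (hq0 : 0 ≤ q) (hq1 : q < 1) (n : ℕ) : qBinom q n n = 1 := by
  have := (qFact_pos hq0 hq1 n).ne'
  simp [qBinom, qFact_zero, this]

lemma qBinom_add_left_le (hq0 : 0 ≤ q) (hq1 : q < 1) (u P : ℕ) :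
    qBinom q (u + P) u ≤ (1 - q)⁻¹ ^ P / qFact q P := by
  have hu := qFact_pos hq0 hq1 u
  have hP := qFact_pos hq0 hq1 P
  rw [qBinom, Nat.add_sub_cancel_left, div_le_div_iff₀ (by positivity) hP]
  calc qFact q (u + P) * qFact q P ≤ qFact q u * (1 - q)⁻¹ ^ P * qFact q P := by
        gcongr; exact qFact_add_le hq0 hq1 u P
    _ = (1 - q)⁻¹ ^ P * (qFact q u * qFact q P) := by ring

lemma qBinom_succ_succ (hq0 : 0 ≤ q) (hq1 : q < 1) {N k : ℕ} (hk : k < N) :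
    qBinom q (N + 1) (k + 1) = qBinom q N k + q ^ (k + 1) * qBinom q N (k + 1) := by
  obtain ⟨r, rfl⟩ : ∃ r, N = k + 1 + r := ⟨N - k - 1, by omega⟩
  have h1 : (1 : ℝ) - q ≠ 0 := (sub_pos.2 hq1).ne'
  have hqk : (1 : ℝ) - q ^ (k + 1) ≠ 0 := (sub_pos.2 (pow_lt_one₀ hq0 hq1 (by omega))).ne'
  have hqr : (1 : ℝ) - q ^ (r + 1) ≠ 0 := (sub_pos.2 (pow_lt_one₀ hq0 hq1 (by omega))).ne'
  have hF := qFact_pos hq0 hq1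
  simp only [qBinom, show k + 1 + r + 1 - (k + 1) = r + 1 by omega,
    show k + 1 + r - k = r + 1 by omega, Nat.add_sub_cancel_left]
  rw [qFact_succ q (k + 1 + r), qFact_succ q k, qFact_succ q r]
  have := (hF k).ne'; have := (hF r).ne'; have := (hF (k + 1 + r)).ne'
  field_simp
  ring

end QCalculus

lemma bb_eq_choose_two (k : ℕ) : bb k = k.choose 2 := (Nat.choose_two_right k).symm

lemma bb_succ (k : ℕ) : bb (k + 1) = bb k + k := by
  simp [bb_eq_choose_two, Nat.choose_succ_succ', add_comm]

lemma bb_add (a b : ℕ) : bb (a + b) = bb a + bb b + a * b := by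
  induction b with
  | zero => simp [bb]
  | succ b ih => rw [← add_assoc, bb_succ, ih, bb_succ]; ring

lemma bb_succ_add_bb (m : ℕ) : bb (m + 1) + bb m = m * m := by
  induction m with
  | zero => rfl
  | succ m ih => rw [bb_succ (m + 1), bb_succ m] at *; nlinarith [ih]

section Oplus

variable {q α : ℝ}

lemma oplus_succ (q α : ℝ) (n : ℕ) : oplus q α (n + 1) = oplus q α n * (1 + α * q ^ n) := by
  rw [oplus, oplus, Finset.prod_Icc_succ_top (by omega), Nat.add_sub_cancel]

lemma oplus_succ' (q α : ℝ) (n : ℕ) : oplus q α (n + 1) = (1 + α) * oplus q (α * q) n := by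
  induction n with
  | zero => simp [oplus]
  | succ n ih => rw [oplus_succ, ih, oplus_succ]; ring

lemma one_le_oplus (hq : 0 ≤ q) (hα : 0 ≤ α) (n : ℕ) : 1 ≤ oplus q α n := by
  induction n with
  | zero => simp [oplus]
  | succ n ih =>
    rw [oplus_succ]
    exact one_le_mul_of_one_le_of_one_le ih (le_add_of_nonneg_right (by positivity))

end Oplus

/-- The mass function `h` of the negative q-binomial distribution of the first kind. -/
noncomputable def negQBinom (q α : ℝ) (n u : ℕ) : ℝ :=
  qBinom q (n + u - 1) u * α ^ u * q ^ bb u / oplus q α (n + u)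

section NegQBinom

variable {q α : ℝ}

-- The recursion for `n = 1`, with the point mass at `0` in the role of the distribution `n = 0`.
lemma negQBinom_one_zero (q α : ℝ) : negQBinom q α 1 0 = (1 + α)⁻¹ * 1 := by
  simp [negQBinom, qBinom, qFact_zero, bb, oplus]

lemma negQBinom_one_succ (hq0 : 0 ≤ q) (hq1 : q < 1) (v : ℕ) :
    negQBinom q α 1 (v + 1) = (1 + α)⁻¹ * (0 + α * negQBinom q (α * q) 1 v) := by
  unfold negQBinom
  rw [Nat.add_sub_cancel_left, Nat.add_sub_cancel_left, qBinom_self hq0 hq1, qBinom_self hq0 hq1,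
    add_comm 1 (v + 1), oplus_succ', add_comm 1 v, bb_succ, div_eq_mul_inv, mul_inv]
  ring

lemma negQBinom_succ_zero (hq0 : 0 ≤ q) (hq1 : q < 1) (n : ℕ) :
    negQBinom q α (n + 2) 0 = (1 + α)⁻¹ * negQBinom q (α * q) (n + 1) 0 := by
  simp only [negQBinom, qBinom_zero_right hq0 hq1, oplus_succ']
  field_simp

lemma negQBinom_succ_succ (hq0 : 0 ≤ q) (hq1 : q < 1) (n v : ℕ) :
    negQBinom q α (n + 2) (v + 1) =
      (1 + α)⁻¹ *
        (negQBinom q (α * q) (n + 1) (v + 1) + α * negQBinom q (α * q) (n + 2) v) := by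
  unfold negQBinom
  rw [show n + 2 + (v + 1) - 1 = n + v + 1 + 1 by omega,
    show n + 1 + (v + 1) - 1 = n + v + 1 by omega, show n + 2 + v - 1 = n + v + 1 by omega,
    show n + 2 + (v + 1) = n + v + 2 + 1 by omega, show n + 1 + (v + 1) = n + v + 2 by omega,
    show n + 2 + v = n + v + 2 by omega,
    qBinom_succ_succ hq0 hq1 (by omega : v < n + v + 1), oplus_succ', bb_succ]
  simp only [div_eq_mul_inv, mul_inv]
  ring

lemma negQBinom_nonneg (hq0 : 0 ≤ q) (hq1 : q < 1) (hα : 0 ≤ α) (n u : ℕ) :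
    0 ≤ negQBinom q α n u := by
  have := qBinom_nonneg hq0 hq1 (n + u - 1) u
  have := one_le_oplus hq0 hα (n + u)
  unfold negQBinom
  positivity

lemma negQBinom_le (hq0 : 0 ≤ q) (hq1 : q < 1) (hα : 0 ≤ α) (n u : ℕ) :
    negQBinom q α (n + 1) u ≤ (1 - q)⁻¹ ^ n / qFact q n * α ^ u := by
  have hB := qBinom_nonneg hq0 hq1 (u + n) u
  rw [negQBinom, show n + 1 + u - 1 = u + n by omega]
  refine (div_le_self (by positivity) (one_le_oplus hq0 hα _)).trans ?_
  calc qBinom q (u + n) u * α ^ u * q ^ bb u ≤ qBinom q (u + n) u * α ^ u * 1 := by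
        gcongr; exact pow_le_one₀ hq0 hq1.le
    _ ≤ (1 - q)⁻¹ ^ n / qFact q n * α ^ u := by
        rw [mul_one]; gcongr; exact qBinom_add_left_le hq0 hq1 u n

lemma summable_negQBinom (hq0 : 0 ≤ q) (hq1 : q < 1) (hα : 0 ≤ α) (hα' : α < 1) (n : ℕ) :
    Summable (negQBinom q α (n + 1)) :=
  .of_nonneg_of_le (negQBinom_nonneg hq0 hq1 hα _) (negQBinom_le hq0 hq1 hα n)
    ((summable_geometric_of_lt_one hα hα').mul_left _)

lemma tsum_negQBinom_le (hq0 : 0 ≤ q) (hq1 : q < 1) (hα : 0 ≤ α) (hα' : α < 1) (n : ℕ) :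
    ∑' u, negQBinom q α (n + 1) u ≤ (1 - q)⁻¹ ^ n / qFact q n * (1 - α)⁻¹ := by
  rw [← tsum_geometric_of_lt_one hα hα', ← tsum_mul_left]
  exact (summable_negQBinom hq0 hq1 hα hα' n).tsum_le_tsum (negQBinom_le hq0 hq1 hα n)
    ((summable_geometric_of_lt_one hα hα').mul_left _)

end NegQBinom

lemma HasSum.of_eq_mul_add_shift {R : Type*} [Ring R] [TopologicalSpace R] [IsTopologicalRing R]
    {f g h : ℕ → R} {c a s t : R} (hg : HasSum g t) (hh : HasSum h s) (h0 : f 0 = c * g 0)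
    (hsucc : ∀ v, f (v + 1) = c * (g (v + 1) + a * h v)) : HasSum f (c * (t + a * s)) := by
  rw [← hasSum_nat_add_iff' 1, Finset.sum_range_one, h0]
  have hg1 := (hasSum_nat_add_iff' 1).2 hg
  rw [Finset.sum_range_one] at hg1
  rw [show (fun v => f (v + 1)) = fun v => c * (g (v + 1) + a * h v) from funext hsucc,
    show c * (t + a * s) - c * g 0 = c * (t - g 0 + a * s) by noncomm_ring]
  exact (hg1.add (hh.mul_left a)).mul_left c

lemma eq_zero_of_one_add_mul_eq {D : ℝ → ℝ} {q α M : ℝ} (hq0 : 0 ≤ q) (hq1 : q ≤ 1)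
    (hα : 0 ≤ α) (hD : ∀ β ∈ Set.Icc 0 α, |D β| ≤ M)
    (hrec : ∀ β ∈ Set.Icc 0 α, (1 + β) * D β = β * D (β * q)) : D α = 0 := by
  set r := α / (1 + α)
  have hr0 : 0 ≤ r := by positivity
  have hr1 : r < 1 := (div_lt_one (by positivity)).2 (by linarith)
  have hM : 0 ≤ M := (abs_nonneg _).trans (hD α ⟨hα, le_rfl⟩)
  have hcontract : ∀ k : ℕ, ∀ β ∈ Set.Icc 0 α, |D β| ≤ r ^ k * M := by
    intro k
    induction k with
    | zero => simpa using hD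
    | succ k ih =>
      rintro β ⟨hβ0, hβα⟩
      have hβq : β * q ∈ Set.Icc 0 α := ⟨by positivity, by nlinarith⟩
      have hmul : (1 + β) * |D β| = β * |D (β * q)| := by
        have := congrArg abs (hrec β ⟨hβ0, hβα⟩)
        rwa [abs_mul, abs_mul, abs_of_nonneg (by linarith : 0 ≤ 1 + β), abs_of_nonneg hβ0]
          at this
      have hβr : β ≤ (1 + β) * r := by
        rw [mul_div_assoc', le_div_iff₀ (by positivity)]; nlinarith
      refine le_of_mul_le_mul_left ?_ (by linarith : 0 < 1 + β)
      calc (1 + β) * |D β| = β * |D (β * q)| := hmul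
        _ ≤ (1 + β) * r * (r ^ k * M) := mul_le_mul hβr (ih _ hβq) (abs_nonneg _) (by positivity)
        _ = (1 + β) * (r ^ (k + 1) * M) := by ring
  have hlim : Filter.Tendsto (fun k : ℕ => r ^ k * M) Filter.atTop (nhds 0) := by
    simpa using (tendsto_pow_atTop_nhds_zero_of_lt_one hr0 hr1).mul_const M
  exact abs_nonpos_iff.1 (ge_of_tendsto' hlim fun k => hcontract k α ⟨hα, le_rfl⟩)

section NegQBinom

variable {q : ℝ}

lemma hasSum_negQBinom_of_rec (hq0 : 0 ≤ q) (hq1 : q < 1) {n : ℕ} {g : ℝ → ℕ → ℝ}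
    (hg : ∀ β, 0 ≤ β → β < 1 → HasSum (g β) 1)
    (h0 : ∀ β, negQBinom q β (n + 1) 0 = (1 + β)⁻¹ * g (β * q) 0)
    (hsucc : ∀ β v, negQBinom q β (n + 1) (v + 1) =
      (1 + β)⁻¹ * (g (β * q) (v + 1) + β * negQBinom q (β * q) (n + 1) v))
    {α : ℝ} (hα : 0 ≤ α) (hα' : α < 1) : HasSum (negQBinom q α (n + 1)) 1 := by
  set S : ℝ → ℝ := fun β => ∑' u, negQBinom q β (n + 1) u
  have hβq : ∀ β ∈ Set.Icc 0 α, 0 ≤ β * q ∧ β * q < 1 := fun β ⟨hβ0, hβα⟩ =>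
    ⟨by positivity, by nlinarith⟩
  have hS : ∀ β ∈ Set.Icc 0 α, S β = (1 + β)⁻¹ * (1 + β * S (β * q)) := fun β hβ =>
    let ⟨h0', h1'⟩ := hβq β hβ
    (HasSum.of_eq_mul_add_shift (hg _ h0' h1') (summable_negQBinom hq0 hq1 h0' h1' n).hasSum
      (h0 β) (hsucc β)).tsum_eq
  have hbound :
      ∀ β ∈ Set.Icc 0 α, |S β - 1| ≤ (1 - q)⁻¹ ^ n / qFact q n * (1 - α)⁻¹ + 1 := by
    rintro β ⟨hβ0, hβα⟩
    have hβ1 : β < 1 := hβα.trans_lt hα'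
    have h1 := tsum_negQBinom_le hq0 hq1 hβ0 hβ1 n
    have h2 : (1 - β)⁻¹ ≤ (1 - α)⁻¹ := by gcongr
    have h3 : 0 ≤ (1 - q)⁻¹ ^ n / qFact q n := by
      have := qFact_pos hq0 hq1 n; have : 0 ≤ (1 - q)⁻¹ := by simp [hq1.le]
      positivity
    have h4 : 0 ≤ S β := tsum_nonneg (negQBinom_nonneg hq0 hq1 hβ0 _)
    rw [abs_le]; constructor <;> nlinarith
  have hD := eq_zero_of_one_add_mul_eq (D := fun β => S β - 1) hq0 hq1.le hα hbound
    fun β hβ => by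
      have : (1 + β) ≠ 0 := by linarith [hβ.1]
      simp only [hS β hβ]; field_simp; ring
  rw [sub_eq_zero] at hD
  exact hD ▸ (summable_negQBinom hq0 hq1 hα hα' n).hasSum

theorem hasSum_negQBinom (hq0 : 0 ≤ q) (hq1 : q < 1) (n : ℕ) {α : ℝ} (hα : 0 ≤ α)
    (hα' : α < 1) :
    HasSum (negQBinom q α (n + 1)) 1 := by
  induction n generalizing α with
  | zero =>
    exact hasSum_negQBinom_of_rec hq0 hq1 (g := fun _ u => if u = 0 then 1 else 0)
      (fun _ _ _ => hasSum_ite_eq 0 1) (fun β => negQBinom_one_zero q β)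
      (fun _ v => negQBinom_one_succ hq0 hq1 v) hα hα'
  | succ n ih =>
    exact hasSum_negQBinom_of_rec hq0 hq1 (fun β hβ hβ' => ih hβ hβ')
      (fun _ => negQBinom_succ_zero hq0 hq1 n) (fun _ v => negQBinom_succ_succ hq0 hq1 n v) hα hα'

end NegQBinom

section FallingFactorial

variable {q : ℝ}

lemma qFall_succ (q : ℝ) (u : ℤ) (m : ℕ) :
    qFall q u (m + 1) = qFall q u m * qInt q (u - (m + 1 : ℕ) + 1) := by
  rw [qFall, qFall, Finset.prod_Icc_succ_top (by omega)]

lemma qFallInv_succ (q : ℝ) (u : ℤ) (m : ℕ) :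
    qFallInv q u (m + 1) = qFallInv q u m * qIntInv q (u - (m + 1 : ℕ) + 1) := by
  rw [qFallInv, qFallInv, Finset.prod_Icc_succ_top (by omega)]

lemma qFallInv_eq_zero {u m : ℕ} (h : u < m) : qFallInv q u m = 0 :=
  Finset.prod_eq_zero (i := u + 1) (by simp; omega) (by simp [qIntInv, qInt])

lemma qFallInv_eq_zpow_mul_qFall (hq : q ≠ 0) (u : ℤ) (m : ℕ) :
    qFallInv q u m = q ^ ((bb (m + 1) : ℤ) - m * u) * qFall q u m := by
  induction m with
  | zero => simp [qFallInv, qFall, bb]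
  | succ m ih =>
    rw [qFallInv_succ, qFall_succ, ih, qIntInv, show (bb (m + 1 + 1) : ℤ) - (m + 1 : ℕ) * u =
      (bb (m + 1) - m * u) + (1 - (u - (m + 1 : ℕ) + 1)) by push_cast [bb_succ (m + 1)]; ring,
      zpow_add₀ hq]
    ring

lemma qFall_mul_qFact (q : ℝ) (a m : ℕ) :
    qFall q ((a + m : ℕ) : ℤ) m * qFact q a = qFact q (a + m) := by
  induction m generalizing a with
  | zero => simp [qFall]
  | succ m ih =>
    rw [qFall_succ,
      show ((a + (m + 1) : ℕ) : ℤ) - (m + 1 : ℕ) + 1 = ((a + 1 : ℕ) : ℤ) by omega,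
      qInt_natCast, mul_assoc, mul_comm _ (qFact q a), ← qFact_succ,
      show a + (m + 1) = a + 1 + m by ring, ih]

end FallingFactorial

lemma qFallInv_mul_negQBinom {q : ℝ} (hq0 : 0 < q) (hq1 : q < 1) (α : ℝ) (n m v : ℕ) :
    qFallInv q ((v + m : ℕ) : ℤ) m * negQBinom q α (n + 1) (v + m) =
      qFall q ((n + m : ℕ) : ℤ) m * α ^ m * negQBinom q α (n + m + 1) v := by
  have hF := qFact_pos hq0.le hq1
  have hpow : q ^ ((bb (m + 1) : ℤ) - m * ((v + m : ℕ) : ℤ)) = q ^ bb v / q ^ bb (v + m) := by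
    rw [eq_div_iff (by positivity), ← zpow_natCast, ← zpow_natCast, ← zpow_add₀ hq0.ne']
    congr 1
    have h : ((bb (m + 1) : ℕ) : ℤ) + bb m = m * m := by exact_mod_cast bb_succ_add_bb m
    push_cast [bb_add v m]
    linear_combination h
  rw [qFallInv_eq_zpow_mul_qFall hq0.ne', hpow,
    eq_div_of_mul_eq (hF v).ne' (qFall_mul_qFact q v m),
    eq_div_of_mul_eq (hF n).ne' (qFall_mul_qFact q n m)]
  unfold negQBinom qBinom
  rw [show n + 1 + (v + m) - 1 = n + m + v by omega, show n + m + 1 + v - 1 = n + m + v by omega,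
    show n + m + v - (v + m) = n by omega, show n + m + v - v = n + m by omega,
    show n + 1 + (v + m) = n + m + 1 + v by omega]
  have := (hF v).ne'; have := (hF n).ne'; have := (hF (v + m)).ne'; have := (hF (n + m)).ne'
  field_simp
  ring

theorem stmt5 (q : ℝ) (hq0 : 0 < q) (hq1 : q < 1) (n : ℕ) (hn : 1 ≤ n) (α : ℝ)
    (hα : 0 < α) (hα' : α < 1) (m : ℕ) :
    HasSum (fun u : ℕ =>
        qFallInv q (u : ℤ) m * qBinom q (n + u - 1) u * α ^ u * q ^ bb u / oplus q α (n + u))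
      (qFall q ((n : ℤ) + (m : ℤ) - 1) m * α ^ m) := by
  obtain ⟨n, rfl⟩ : ∃ k, n = k + 1 := ⟨n - 1, by omega⟩
  have hterm : ∀ u : ℕ, qFallInv q (u : ℤ) m * qBinom q (n + 1 + u - 1) u * α ^ u * q ^ bb u
      / oplus q α (n + 1 + u) = qFallInv q u m * negQBinom q α (n + 1) u := fun u => by
    rw [negQBinom]; ring
  simp only [hterm]
  rw [← hasSum_nat_add_iff' m, Finset.sum_eq_zero fun u hu => by
      rw [qFallInv_eq_zero (Finset.mem_range.1 hu), zero_mul], sub_zero,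
    show ((n + 1 : ℕ) : ℤ) + m - 1 = ((n + m : ℕ) : ℤ) by push_cast; ring]
  simp only [qFallInv_mul_negQBinom hq0 hq1]
  simpa only [mul_one] using
    (hasSum_negQBinom hq0.le hq1 (n + m) hα.le hα').mul_left (qFall q (n + m : ℕ) m * α ^ m)
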